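/- Fix 0 < δ ≪ 1, μ = 1−2δ. There exists J_δ > 0 such that: for all j ∈ ℤ² with |j| > J_δ and |b(j)| < 2|j|^μ, if h ∈ ℤ² satisfies |j−h| < 2·max(|j|,|h|)^δ and v(h) ≠ v(j), then |v(j)| > (1/2)|j|^δ. -/

import Mathlib

noncomputable def enorm2 (v : ℤ × ℤ) : ℝ := Real.sqrt ((v.1 : ℝ)^2 + (v.2 : ℝ)^2)

def zdot (x v : ℤ × ℤ) : ℤ := x.1 * v.1 + x.2 * v.2

def IsGenerator (v : ℤ × ℤ) : Prop := (Int.gcd v.1 v.2 = 1 ∧ 0 < v.1) ∨ v = (0, 1)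

def IsMinimizer (δ : ℝ) (j v : ℤ × ℤ) : Prop :=
  IsGenerator v ∧ enorm2 v ≤ enorm2 j ^ δ ∧
    ∀ w : ℤ × ℤ, IsGenerator w → enorm2 w ≤ enorm2 j ^ δ → |zdot j v| ≤ |zdot j w|

/-!
If `|v(j)| ≤ |j|^δ / 2`, then `v(j)` is also admissible for `h`, because `|j| ≤ 2|h|`. Since `h` is
close to `j` and `|j·v(j)| < 2|j|^μ`, minimality gives `|h·v(h)| ≤ |h·v(j)| ≤ 8|h|^μ`. Distinct
primitive vectors have a nonzero integer determinant, so Cramer's rule bounds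
`|h| ≤ 16 |h|^μ |h|^δ = 16 |h|^(1-δ)`, which is impossible once `|h|^δ > 16`.
-/

open Complex ComplexConjugate

noncomputable def toComplex (v : ℤ × ℤ) : ℂ := ⟨v.1, v.2⟩

lemma enorm2_eq_norm_toComplex (v : ℤ × ℤ) : enorm2 v = ‖toComplex v‖ := by
  simp [enorm2, toComplex, Complex.norm_def, Complex.normSq_apply, sq]

lemma toComplex_sub (a b : ℤ × ℤ) : toComplex (a - b) = toComplex a - toComplex b := by
  apply Complex.ext <;> simp [toComplex]

lemma zdot_eq_re (x v : ℤ × ℤ) : (zdot x v : ℝ) = (toComplex x * conj (toComplex v)).re := by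
  simp [toComplex, zdot, Complex.mul_re]

lemma enorm2_nonneg (v : ℤ × ℤ) : 0 ≤ enorm2 v := Real.sqrt_nonneg _

lemma enorm2_sub_enorm2_le (a b : ℤ × ℤ) : enorm2 a - enorm2 b ≤ enorm2 (a - b) := by
  simpa only [enorm2_eq_norm_toComplex, toComplex_sub] using norm_sub_norm_le _ _

lemma abs_zdot_le (x v : ℤ × ℤ) : |(zdot x v : ℝ)| ≤ enorm2 x * enorm2 v := by
  rw [zdot_eq_re, enorm2_eq_norm_toComplex, enorm2_eq_norm_toComplex,
    ← Complex.norm_conj (toComplex v), ← norm_mul]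
  exact Complex.abs_re_le_norm _

lemma abs_zdot_le_abs_zdot_add (j h v : ℤ × ℤ) :
    |(zdot h v : ℝ)| ≤ |(zdot j v : ℝ)| + enorm2 (j - h) * enorm2 v := by
  have hsplit : (zdot h v : ℝ) = zdot j v - zdot (j - h) v := by
    simp only [zdot, Prod.fst_sub, Prod.snd_sub]; push_cast; ring
  rw [hsplit]
  exact (abs_sub _ _).trans (by gcongr; exact abs_zdot_le _ _)

lemma IsGenerator.det_ne_zero {v w : ℤ × ℤ} (hv : IsGenerator v) (hw : IsGenerator w)
    (hvw : v ≠ w) : v.1 * w.2 - v.2 * w.1 ≠ 0 := by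
  intro hd
  have hd' : v.1 * w.2 = v.2 * w.1 := by linarith
  rcases hv with ⟨hg, hp⟩ | rfl
  · rcases hw with ⟨hg', hp'⟩ | rfl
    · have h1 : v.1 ∣ w.1 :=
        (Int.isCoprime_iff_gcd_eq_one.mpr hg).dvd_of_dvd_mul_left ⟨w.2, by linarith⟩
      have h2 : w.1 ∣ v.1 :=
        (Int.isCoprime_iff_gcd_eq_one.mpr hg').dvd_of_dvd_mul_left ⟨v.2, by linarith⟩
      have he1 : v.1 = w.1 := Int.dvd_antisymm hp.le hp'.le h1 h2
      have he2 : v.2 = w.2 := by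
        rw [he1] at hd'
        exact (mul_left_cancel₀ hp'.ne' (hd'.trans (mul_comm _ _))).symm
      exact hvw (Prod.ext he1 he2)
    · dsimp only at hd'; omega
  · rcases hw with ⟨hg', hp'⟩ | rfl
    · dsimp only at hd'; omega
    · exact hvw rfl

-- Cramer's rule for the basis `v, w`, written in `ℂ ≅ ℝ²`.
lemma abs_det_mul_enorm2_le (x v w : ℤ × ℤ) :
    |((v.1 * w.2 - v.2 * w.1 : ℤ) : ℝ)| * enorm2 x ≤
      |(zdot x v : ℝ)| * enorm2 w + |(zdot x w : ℝ)| * enorm2 v := by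
  have hcramer : ((v.1 * w.2 - v.2 * w.1 : ℤ) : ℂ) * toComplex x =
      (zdot x v : ℂ) * (-I * toComplex w) + (zdot x w : ℂ) * (I * toComplex v) := by
    apply Complex.ext <;> simp [toComplex, zdot] <;> ring
  calc |((v.1 * w.2 - v.2 * w.1 : ℤ) : ℝ)| * enorm2 x
      = ‖(zdot x v : ℂ) * (-I * toComplex w) + (zdot x w : ℂ) * (I * toComplex v)‖ := by
        rw [← hcramer, norm_mul, Complex.norm_intCast, enorm2_eq_norm_toComplex]
    _ ≤ _ := (norm_add_le _ _).trans_eq (by simp [enorm2_eq_norm_toComplex])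

lemma enorm2_le_of_abs_zdot_le {x v w : ℤ × ℤ} {A R : ℝ} (hv : IsGenerator v)
    (hw : IsGenerator w) (hvw : v ≠ w) (hvR : enorm2 v ≤ R) (hwR : enorm2 w ≤ R)
    (hxv : |(zdot x v : ℝ)| ≤ A) (hxw : |(zdot x w : ℝ)| ≤ A) : enorm2 x ≤ 2 * A * R := by
  have hdet : (1 : ℝ) ≤ |((v.1 * w.2 - v.2 * w.1 : ℤ) : ℝ)| := by
    exact_mod_cast Int.one_le_abs (hv.det_ne_zero hw hvw)
  have hA : 0 ≤ A := (abs_nonneg _).trans hxv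
  calc enorm2 x ≤ |((v.1 * w.2 - v.2 * w.1 : ℤ) : ℝ)| * enorm2 x :=
        le_mul_of_one_le_left (enorm2_nonneg x) hdet
    _ ≤ |(zdot x v : ℝ)| * enorm2 w + |(zdot x w : ℝ)| * enorm2 v := abs_det_mul_enorm2_le x v w
    _ ≤ A * R + A * R := by gcongr <;> exact enorm2_nonneg _
    _ = 2 * A * R := by ring

lemma rpow_le_two_mul_rpow {x y p : ℝ} (hy : 0 ≤ y) (hyx : y ≤ 2 * x) (hp0 : 0 ≤ p)
    (hp1 : p ≤ 1) : y ^ p ≤ 2 * x ^ p := by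
  have hx : 0 ≤ x := by linarith
  have h2 : (2 : ℝ) ^ p ≤ 2 := by
    simpa using Real.rpow_le_rpow_of_exponent_le (by norm_num : (1 : ℝ) ≤ 2) hp1
  calc y ^ p ≤ (2 * x) ^ p := by gcongr
    _ = 2 ^ p * x ^ p := Real.mul_rpow (by norm_num) hx
    _ ≤ 2 * x ^ p := by gcongr

lemma mul_rpow_lt_self {x p q c : ℝ} (hx : 0 < x) (hpq : p + q = 1) (hc : c < x ^ p) :
    c * x ^ q < x := by
  calc c * x ^ q < x ^ p * x ^ q := by gcongr
    _ = x := by rw [← Real.rpow_add hx, hpq, Real.rpow_one]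

lemma le_two_mul_of_sub_lt_two_mul_max_rpow {a b δ : ℝ} (hb : 0 ≤ b) (hδ : δ ≤ 1/2)
    (hM : 1 ≤ max a b) (hMδ : 4 < max a b ^ δ) (h : a - b < 2 * max a b ^ δ) : a ≤ 2 * b := by
  have hM' : 4 < max a b ^ (1 - δ) :=
    hMδ.trans_le (Real.rpow_le_rpow_of_exponent_le hM (by linarith))
  have hhalf : a - b < max a b / 2 := by
    linarith [mul_rpow_lt_self (by linarith) (sub_add_cancel 1 δ) hM']
  rcases le_total a b with hab | hab
  · linarith
  · rw [max_eq_left hab] at hhalf; linarith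

/-- If `|j| > J_δ`, `|b(j)| < 2|j|^μ`, `|j − h| < 2 max(|j|,|h|)^δ` and
`v(h) ≠ v(j)`, then `|v(j)| > |j|^δ / 2`. -/
theorem stmt3 (δ μ : ℝ) (hδ : 0 < δ) (hδ' : δ < 1/4) (hμ : μ = 1 - 2*δ) :
    ∃ Jδ : ℝ, 0 < Jδ ∧ ∀ j h vj vh : ℤ × ℤ, j ≠ 0 → h ≠ 0 → Jδ < enorm2 j →
      IsMinimizer δ j vj → IsMinimizer δ h vh →
      (|zdot j vj| : ℝ) < 2 * enorm2 j ^ μ →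
      enorm2 (j - h) < 2 * (max (enorm2 j) (enorm2 h)) ^ δ →
      vh ≠ vj →
      (1/2) * enorm2 j ^ δ < enorm2 vj := by
  set T : ℝ := 16 ^ δ⁻¹
  have hT : 1 ≤ T := Real.one_le_rpow (by norm_num) (by positivity)
  have lt_rpow {x : ℝ} (hx : T < x) : 16 < x ^ δ :=
    (Real.rpow_inv_lt_iff_of_pos (by norm_num) (by linarith) hδ).mp hx
  refine ⟨2 * T, by positivity, fun j h vj vh _ _ hJ hmj hmh hb hjh hne => ?_⟩
  by_contra! hvj
  set N := enorm2 j
  set H := enorm2 h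
  have hNH : N ≤ 2 * H :=
    le_two_mul_of_sub_lt_two_mul_max_rpow (δ := δ) (enorm2_nonneg h) (by linarith)
      (by linarith [le_max_left N H])
      (by linarith [lt_rpow ((by linarith : T < N).trans_le (le_max_left N H))])
      (by linarith [enorm2_sub_enorm2_le j h])
  have hH : 16 < H ^ δ := lt_rpow (by linarith)
  have hH1 : 1 ≤ H := by linarith
  have hvjH : enorm2 vj ≤ H ^ δ := by
    linarith [rpow_le_two_mul_rpow (enorm2_nonneg j) hNH hδ.le (by linarith)]
  have hdist : enorm2 (j - h) ≤ 4 * H ^ δ := by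
    have hMδ := rpow_le_two_mul_rpow (le_max_of_le_left (enorm2_nonneg j))
      (max_le hNH (by linarith : H ≤ 2 * H)) hδ.le (by linarith)
    linarith
  have hhvj : |(zdot h vj : ℝ)| ≤ 8 * H ^ μ := by
    have hHδμ : H ^ δ * H ^ δ ≤ H ^ μ := by
      rw [← Real.rpow_add (by linarith)]
      exact Real.rpow_le_rpow_of_exponent_le hH1 (by linarith)
    have hNμ := rpow_le_two_mul_rpow (enorm2_nonneg j) hNH (by linarith) (by linarith : μ ≤ 1)
    nlinarith [abs_zdot_le_abs_zdot_add j h vj, enorm2_nonneg (j - h)]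
  have hhvh : |(zdot h vh : ℝ)| ≤ 8 * H ^ μ :=
    le_trans (by exact_mod_cast hmh.2.2 vj hmj.1 hvjH) hhvj
  have hcramer := enorm2_le_of_abs_zdot_le hmj.1 hmh.1 hne.symm hvjH hmh.2.1 hhvj hhvh
  have hH_lt := mul_rpow_lt_self (by linarith) (show δ + (μ + δ) = 1 by linarith) hH
  rw [Real.rpow_add (by linarith)] at hH_lt
  linarith
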